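/- arXiv:2506.03441 — 2 statements merged into one kernel-verified Lean document; each statement's English description precedes it below -/
import Mathlib

section
/- Suppose that for every unweighted graph H with m_H edges and every 1 ≤ k ≤ ⌊n/2⌋ the bound λ_max(L(F_k(H))) ≤ m_H + k holds for all triangle-free H. Then the bound λ_max(L(F_k(G))) ≤ m + k holds for all unweighted graphs G with m edges. Equivalently: if some graph G violates λ_max(L(F_k(G))) ≤ m + k, then some triangle-free graph G' with m' edges violates λ_max(L(F_k(G'))) ≤ m' + k. -/
open Matrix Finset

noncomputable section

/-- Edge weight between vertices `A`, `B` of a token graph: nonzero exactly when the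
symmetric difference of `A` and `B` is an edge `{a, b}` of `G` with `a ∈ A`, `b ∈ B`,
in which case it is `w a b`. -/
def tokenW {n : ℕ} (w : Fin n → Fin n → ℝ) (A B : Finset (Fin n)) : ℝ :=
  ∑ a ∈ A \ B, ∑ b ∈ B \ A, if A \ {a} = B \ {b} then w a b else 0

/-- Vertices of the `k`-th token graph on `[n]`: the `k`-element subsets. -/
abbrev TokenVert (n k : ℕ) := {s : Finset (Fin n) // s.card = k}

/-- Weighted adjacency matrix of the `k`-th token graph `F_k(G)`. -/
def tokenA {n : ℕ} (w : Fin n → Fin n → ℝ) (k : ℕ) :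
    Matrix (TokenVert n k) (TokenVert n k) ℝ :=
  Matrix.of fun A B => tokenW w A.1 B.1

/-- Weighted degree matrix of `F_k(G)`. -/
def tokenD {n : ℕ} (w : Fin n → Fin n → ℝ) (k : ℕ) :
    Matrix (TokenVert n k) (TokenVert n k) ℝ :=
  Matrix.diagonal fun A => ∑ B : TokenVert n k, tokenW w A.1 B.1

/-- Weighted Laplacian of `F_k(G)`. -/
def tokenL {n : ℕ} (w : Fin n → Fin n → ℝ) (k : ℕ) :
    Matrix (TokenVert n k) (TokenVert n k) ℝ :=
  tokenD w k - tokenA w k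

/-- Weighted signless Laplacian of `F_k(G)`. -/
def tokenQ {n : ℕ} (w : Fin n → Fin n → ℝ) (k : ℕ) :
    Matrix (TokenVert n k) (TokenVert n k) ℝ :=
  tokenD w k + tokenA w k

/-- Indicator weight function of a simple graph. -/
def wOf {n : ℕ} (G : SimpleGraph (Fin n)) [DecidableRel G.Adj] :
    Fin n → Fin n → ℝ := fun i j => if G.Adj i j then 1 else 0

/-!
Removing a triangle `Δ` from `G` lowers the edge count by `3`, the token Laplacian is additive
in the edge weights, and `λ_max(L(F_k(Δ))) ≤ 3`: a token move along `Δ` fixes the tokens off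
`Δ`, so `F_k(Δ)` is a disjoint union of graphs on at most `3` vertices. Weyl's inequality and
induction on the number of edges then carry the bound from triangle-free graphs to all graphs.
-/

theorem Matrix.two_mul_dotProduct_diagonal_sub_mulVec {ι : Type*} [Fintype ι] [DecidableEq ι]
    {W : Matrix ι ι ℝ} (hW : W.IsSymm) (x : ι → ℝ) :
    2 * (x ⬝ᵥ (diagonal (fun i => ∑ j, W i j) - W) *ᵥ x) =
      ∑ i, ∑ j, W i j * (x i - x j) ^ 2 := by
  have hswap : ∑ i, ∑ j, W i j * x j ^ 2 = ∑ i, ∑ j, W i j * x i ^ 2 := by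
    rw [sum_comm]
    exact sum_congr rfl fun i _ => sum_congr rfl fun j _ => by rw [hW.apply i j]
  have hquad : x ⬝ᵥ (diagonal (fun i => ∑ j, W i j) - W) *ᵥ x =
      ∑ i, ∑ j, W i j * x i ^ 2 - ∑ i, ∑ j, W i j * (x i * x j) := by
    rw [sub_mulVec, dotProduct_sub]
    simp only [dotProduct, mulVec_diagonal]
    simp only [mulVec, dotProduct, mul_sum, sum_mul]
    congr 1 <;> exact sum_congr rfl fun i _ => sum_congr rfl fun j _ => by ring
  have hexpand : ∑ i, ∑ j, W i j * (x i - x j) ^ 2 = ∑ i, ∑ j, W i j * x i ^ 2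
      - 2 * ∑ i, ∑ j, W i j * (x i * x j) + ∑ i, ∑ j, W i j * x j ^ 2 := by
    simp only [mul_sum, ← sum_sub_distrib, ← sum_add_distrib]
    exact sum_congr rfl fun i _ => sum_congr rfl fun j _ => by ring
  rw [hquad, hexpand, hswap]
  ring

theorem Finset.sum_sum_sub_sq_le {α : Type*} (s : Finset α) (f : α → ℝ) :
    ∑ i ∈ s, ∑ j ∈ s, (f i - f j) ^ 2 ≤ 2 * #s * ∑ i ∈ s, f i ^ 2 := by
  have h : ∑ i ∈ s, ∑ j ∈ s, (f i - f j) ^ 2 =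
      2 * #s * ∑ i ∈ s, f i ^ 2 - 2 * (∑ i ∈ s, f i) ^ 2 := by
    simp only [sub_sq, sum_add_distrib, sum_sub_distrib, sum_const, nsmul_eq_mul, mul_assoc,
      ← mul_sum]
    rw [sq (∑ i ∈ s, f i), sum_mul]
    ring
  nlinarith [sq_nonneg (∑ i ∈ s, f i)]

theorem Matrix.IsHermitian.spectrum_le_iff_dotProduct_mulVec_le {ι : Type*} [Fintype ι]
    [DecidableEq ι] {M : Matrix ι ι ℝ} (hM : M.IsHermitian) (c : ℝ) :
    (∀ μ ∈ spectrum ℝ M, μ ≤ c) ↔ ∀ x : ι → ℝ, x ⬝ᵥ M *ᵥ x ≤ c * (x ⬝ᵥ x) := by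
  open scoped MatrixOrder in
  rw [← le_algebraMap_iff_spectrum_le hM.isSelfAdjoint, le_iff, posSemidef_iff_dotProduct_mulVec,
    and_iff_right ((IsSelfAdjoint.algebraMap _ (.all c)).sub hM.isSelfAdjoint).isHermitian]
  simp [Algebra.algebraMap_eq_smul_one, sub_mulVec, dotProduct_sub, smul_mulVec]

section TokenGraph

variable {n : ℕ}

theorem tokenW_comm {w : Fin n → Fin n → ℝ} (hw : ∀ i j, w i j = w j i)
    (A B : Finset (Fin n)) : tokenW w A B = tokenW w B A := by
  rw [tokenW, sum_comm]
  refine sum_congr rfl fun b _ => sum_congr rfl fun a _ => ?_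
  rw [hw a b]
  exact if_congr eq_comm rfl rfl

theorem tokenW_add (w₁ w₂ : Fin n → Fin n → ℝ) (A B : Finset (Fin n)) :
    tokenW (w₁ + w₂) A B = tokenW w₁ A B + tokenW w₂ A B := by
  simp only [tokenW, Pi.add_apply, ite_add_zero, sum_add_distrib]

theorem tokenW_eq_sum_filter (w : Fin n → Fin n → ℝ) (A B : Finset (Fin n)) :
    tokenW w A B =
      ∑ p ∈ ((A \ B) ×ˢ (B \ A)).filter (fun p => A \ {p.1} = B \ {p.2}), w p.1 p.2 := by
  rw [tokenW, sum_filter, sum_product]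

theorem card_filter_sdiff_singleton_eq_le_one (A B : Finset (Fin n)) :
    #(((A \ B) ×ˢ (B \ A)).filter (fun p => A \ {p.1} = B \ {p.2})) ≤ 1 := by
  refine card_le_one.2 fun p hp q hq => ?_
  simp only [mem_filter, mem_product, mem_sdiff] at hp hq
  have h₁ : p.1 = q.1 := by
    by_contra h
    have : p.1 ∈ A \ {q.1} := mem_sdiff.2 ⟨hp.1.1.1, by simpa using h⟩
    rw [hq.2] at this
    exact hp.1.1.2 (mem_sdiff.1 this).1
  have h₂ : p.2 = q.2 := by
    by_contra h
    have : p.2 ∈ B \ {q.2} := mem_sdiff.2 ⟨hp.1.2.1, by simpa using h⟩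
    rw [← hq.2] at this
    exact hp.1.2.2 (mem_sdiff.1 this).1
  exact Prod.ext h₁ h₂

theorem tokenW_le_one {w : Fin n → Fin n → ℝ} (hw : ∀ i j, w i j ≤ 1)
    (A B : Finset (Fin n)) : tokenW w A B ≤ 1 := by
  rw [tokenW_eq_sum_filter]
  calc _ ≤ #(((A \ B) ×ˢ (B \ A)).filter (fun p => A \ {p.1} = B \ {p.2})) • (1 : ℝ) :=
        sum_le_card_nsmul _ _ _ fun p _ => hw p.1 p.2
    _ ≤ 1 := by simpa using card_filter_sdiff_singleton_eq_le_one A B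

theorem sdiff_eq_sdiff_of_tokenW_ne_zero {w : Fin n → Fin n → ℝ} {T : Finset (Fin n)}
    (hT : ∀ i j, w i j ≠ 0 → i ∈ T ∧ j ∈ T) {A B : Finset (Fin n)} (hAB : tokenW w A B ≠ 0) :
    A \ T = B \ T := by
  rw [tokenW_eq_sum_filter] at hAB
  obtain ⟨⟨a, b⟩, hab, hw⟩ := exists_ne_zero_of_sum_ne_zero hAB
  obtain ⟨haT, hbT⟩ := hT a b hw
  have hsdiff : A \ {a} = B \ {b} := (mem_filter.1 hab).2
  have hsub : ∀ {X : Finset (Fin n)} {x : Fin n}, x ∈ T → (X \ {x}) \ T = X \ T :=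
    fun hx => by
      rw [sdiff_sdiff_left, sup_eq_union, union_eq_right.2 (singleton_subset_iff.2 hx)]
  rw [← hsub haT, hsdiff, hsub hbT]

theorem tokenA_isSymm {w : Fin n → Fin n → ℝ} (hw : ∀ i j, w i j = w j i) (k : ℕ) :
    (tokenA w k).IsSymm := by
  ext A B
  exact tokenW_comm hw B.1 A.1

theorem tokenL_isHermitian {w : Fin n → Fin n → ℝ} (hw : ∀ i j, w i j = w j i) (k : ℕ) :
    (tokenL w k).IsHermitian :=
  (isHermitian_diagonal _).sub (isHermitian_iff_isSymm.2 (tokenA_isSymm hw k))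

theorem tokenL_add (w₁ w₂ : Fin n → Fin n → ℝ) (k : ℕ) :
    tokenL (w₁ + w₂) k = tokenL w₁ k + tokenL w₂ k := by
  have hA : tokenA (w₁ + w₂) k = tokenA w₁ k + tokenA w₂ k := by
    ext A B
    exact tokenW_add w₁ w₂ A.1 B.1
  have hD : tokenD (w₁ + w₂) k = tokenD w₁ k + tokenD w₂ k := by
    simp only [tokenD, tokenW_add, sum_add_distrib, diagonal_add]
  rw [tokenL, tokenL, tokenL, hA, hD]
  abel

theorem card_filter_tokenVert_sdiff_eq_le (k : ℕ) (T S : Finset (Fin n)) :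
    #((univ : Finset (TokenVert n k)).filter fun A => A.1 \ T = S) ≤ (#T).choose (k - #S) := by
  rw [← card_powersetCard]
  refine card_le_card_of_injOn (fun A => A.1 ∩ T) (fun A hA => ?_) (fun A hA B hB hAB => ?_)
  · have hAS : A.1 \ T = S := (mem_filter.1 hA).2
    have hcard := card_sdiff_add_card_inter A.1 T
    rw [hAS, A.2] at hcard
    exact mem_powersetCard.2 ⟨inter_subset_right, show #(A.1 ∩ T) = k - #S by omega⟩
  · have hAS : A.1 \ T = S := (mem_filter.1 hA).2
    have hBS : B.1 \ T = S := (mem_filter.1 hB).2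
    apply Subtype.ext
    rw [← sdiff_union_inter A.1 T, ← sdiff_union_inter B.1 T, hAS, hBS]
    exact congrArg (S ∪ ·) hAB

theorem dotProduct_tokenL_mulVec_le {w : Fin n → Fin n → ℝ} {T : Finset (Fin n)}
    (hw : ∀ i j, w i j = w j i) (hw₁ : ∀ i j, w i j ≤ 1)
    (hT : ∀ i j, w i j ≠ 0 → i ∈ T ∧ j ∈ T) (k : ℕ) (x : TokenVert n k → ℝ) :
    x ⬝ᵥ tokenL w k *ᵥ x ≤ (#T).choose (#T / 2) * (x ⬝ᵥ x) := by
  set F : Finset (Fin n) → Finset (TokenVert n k) := fun S => univ.filter fun A => A.1 \ T = S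
  set c : ℝ := ↑((#T).choose (#T / 2))
  have hF : ∀ S, (#(F S) : ℝ) ≤ c := fun S => by
    simp only [F, c]
    exact_mod_cast (card_filter_tokenVert_sdiff_eq_le k T S).trans (Nat.choose_le_middle _ _)
  have hsq : x ⬝ᵥ x = ∑ A, x A ^ 2 := by simp only [dotProduct, sq]
  have key : 2 * (x ⬝ᵥ tokenL w k *ᵥ x) ≤ 2 * c * (x ⬝ᵥ x) := calc
    2 * (x ⬝ᵥ tokenL w k *ᵥ x) = ∑ A, ∑ B, tokenW w A.1 B.1 * (x A - x B) ^ 2 :=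
      two_mul_dotProduct_diagonal_sub_mulVec (tokenA_isSymm hw k) x
    _ ≤ ∑ A, ∑ B ∈ F (A.1 \ T), (x A - x B) ^ 2 := by
      refine sum_le_sum fun A _ => ?_
      rw [sum_filter]
      refine sum_le_sum fun B _ => ?_
      by_cases hAB : tokenW w A.1 B.1 = 0
      · rw [hAB, zero_mul]
        split_ifs <;> positivity
      · rw [if_pos (sdiff_eq_sdiff_of_tokenW_ne_zero hT hAB).symm]
        exact mul_le_of_le_one_left (sq_nonneg _) (tokenW_le_one hw₁ _ _)
    _ = ∑ S, ∑ A ∈ F S, ∑ B ∈ F S, (x A - x B) ^ 2 := by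
      rw [← sum_fiberwise univ (fun A : TokenVert n k => A.1 \ T)]
      exact sum_congr rfl fun S _ => sum_congr rfl fun A hA => by rw [(mem_filter.1 hA).2]
    _ ≤ ∑ S, 2 * c * ∑ A ∈ F S, x A ^ 2 := by
      refine sum_le_sum fun S _ => (sum_sum_sub_sq_le _ x).trans ?_
      gcongr
      exact hF S
    _ = 2 * c * (x ⬝ᵥ x) := by
      rw [← mul_sum, sum_fiberwise univ (fun A : TokenVert n k => A.1 \ T), hsq]
  linarith

end TokenGraph

theorem SimpleGraph.exists_triangle_removal {V : Type*} [Fintype V] [DecidableEq V]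
    {G : SimpleGraph V} [DecidableRel G.Adj] (hG : ¬ G.CliqueFree 3) :
    ∃ (H : SimpleGraph V) (_ : DecidableRel H.Adj) (T : Finset V), #T = 3 ∧ H ≤ G ∧
      (∀ i j, (G \ H).Adj i j → i ∈ T ∧ j ∈ T) ∧ #H.edgeFinset + 3 = #G.edgeFinset := by
  obtain ⟨T, hT⟩ := not_forall.1 hG
  obtain ⟨a, b, c, hab, hac, hbc, rfl⟩ := is3Clique_iff.1 (not_not.1 hT)
  set E : Finset (Sym2 V) := {s(a, b), s(a, c), s(b, c)}
  have hEG : E ⊆ G.edgeFinset := by simp [E, insert_subset_iff, hab, hac, hbc]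
  have hET : E ⊆ ({a, b, c} : Finset V).sym2 := by simp [E, insert_subset_iff]
  have hE : #E = 3 := by
    have := hab.ne
    have := hac.ne
    have := hbc.ne
    exact card_eq_three.2 ⟨_, _, _, by grind, by grind, by grind, rfl⟩
  refine ⟨G.deleteEdges E, Classical.decRel _, {a, b, c},
    card_eq_three.2 ⟨a, b, c, hab.ne, hac.ne, hbc.ne, rfl⟩, deleteEdges_le _,
    fun i j hij => ?_, ?_⟩
  · simp only [sdiff_adj, deleteEdges_adj, not_and, not_not, Finset.mem_coe] at hij
    exact mk_mem_sym2_iff.1 (hET (hij.2 hij.1))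
  · have := card_le_card hEG
    rw [edgeFinset_deleteEdges, card_sdiff_of_subset hEG]
    omega

section GraphWeights

variable {n : ℕ}

theorem wOf_comm (G : SimpleGraph (Fin n)) [DecidableRel G.Adj] (i j : Fin n) :
    wOf G i j = wOf G j i := by
  simp only [wOf, G.adj_comm]

theorem wOf_le_one (G : SimpleGraph (Fin n)) [DecidableRel G.Adj] (i j : Fin n) :
    wOf G i j ≤ 1 := by
  unfold wOf
  split_ifs <;> norm_num

theorem adj_of_wOf_ne_zero {G : SimpleGraph (Fin n)} [DecidableRel G.Adj] {i j : Fin n}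
    (h : wOf G i j ≠ 0) : G.Adj i j :=
  by_contra fun hij => h (if_neg hij)

theorem wOf_eq_add_wOf_sdiff {G H : SimpleGraph (Fin n)} [DecidableRel G.Adj]
    [DecidableRel H.Adj] (hHG : H ≤ G) : wOf G = wOf H + wOf (G \ H) := by
  funext i j
  by_cases hH : H.Adj i j
  · simp [wOf, hH, hHG hH]
  · simp [wOf, hH]

theorem spectrum_tokenL_wOf_le_of_sdiff_subset {G H : SimpleGraph (Fin n)}
    [DecidableRel G.Adj] [DecidableRel H.Adj] {T : Finset (Fin n)} (hHG : H ≤ G)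
    (hT : ∀ i j, (G \ H).Adj i j → i ∈ T ∧ j ∈ T) {k : ℕ} {c : ℝ}
    (hH : ∀ μ ∈ spectrum ℝ (tokenL (wOf H) k), μ ≤ c) :
    ∀ μ ∈ spectrum ℝ (tokenL (wOf G) k), μ ≤ c + (#T).choose (#T / 2) := by
  have hLH := tokenL_isHermitian (wOf_comm H) k
  have hLGH := tokenL_isHermitian (wOf_comm (G \ H)) k
  rw [wOf_eq_add_wOf_sdiff hHG, tokenL_add, (hLH.add hLGH).spectrum_le_iff_dotProduct_mulVec_le]
  intro x
  have hHx := (hLH.spectrum_le_iff_dotProduct_mulVec_le c).1 hH x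
  have hGHx := dotProduct_tokenL_mulVec_le (wOf_comm (G \ H)) (wOf_le_one (G \ H))
    (fun i j hij => hT i j (adj_of_wOf_ne_zero hij)) k x
  rw [add_mulVec, dotProduct_add]
  linarith

end GraphWeights

/-- If the bound `λ_max(L(F_k(H))) ≤ m_H + k` holds for all triangle-free unweighted
graphs `H`, then it holds for all unweighted graphs `G`. -/
theorem tokenL_bound_of_triangleFree_bound
    (h : ∀ (n : ℕ) (H : SimpleGraph (Fin n)) [DecidableRel H.Adj] (k : ℕ),
      H.CliqueFree 3 → 1 ≤ k → 2 * k ≤ n →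
      ∀ μ ∈ spectrum ℝ (tokenL (wOf H) k), μ ≤ (H.edgeFinset.card : ℝ) + (k : ℝ)) :
    ∀ (n : ℕ) (G : SimpleGraph (Fin n)) [DecidableRel G.Adj] (k : ℕ),
      1 ≤ k → 2 * k ≤ n →
      ∀ μ ∈ spectrum ℝ (tokenL (wOf G) k), μ ≤ (G.edgeFinset.card : ℝ) + (k : ℝ) := by
  intro n G _ k hk hkn
  induction hm : #G.edgeFinset using Nat.strong_induction_on generalizing G with
  | _ m ih =>
    by_cases hG : G.CliqueFree 3
    · exact hm ▸ h n G k hG hk hkn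
    obtain ⟨H, _, T, hT, hHG, hGH, hcard⟩ := G.exists_triangle_removal hG
    have hΔ : ((#T).choose (#T / 2) : ℝ) = 3 := by norm_num [hT]
    intro μ hμ
    have hμH := spectrum_tokenL_wOf_le_of_sdiff_subset hHG hGH (ih _ (by omega) H rfl) μ hμ
    rw [← hm, ← hcard]
    push_cast
    linarith
end
end

section
/- Let G = (V, E) be a graph and suppose z : E → ℝ satisfies z ≥ 0, the degree constraints Σ_{j ∈ N(i)} z_{ij} ≤ 1 for all i ∈ V, and the odd-set constraints Σ_{(i,j) ∈ E(S)} z_{ij} ≤ (|S|-1)/2 for all odd subsets S ⊆ V. Then for every T ⊆ V and F ⊆ δ(T) with |T| + |F| odd, z also satisfies Σ_{(i,j) ∈ E(T) ∪ F} z_{ij} ≤ (|T| + |F| - 1)/2. -/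
/-!
Call a vertex outside `T` an odd (even) tip if an odd (positive even) number of teeth of `F`
end there. Each tooth has exactly one endpoint outside `T`, so `|F|` is the sum of these numbers;
hence `|T ∪ oddTips| ≡ |T| + |F|` is odd and `|oddTips| + 2|evenTips| ≤ |F|`. Every edge of
`E(T) ∪ F` lies in `E(T ∪ oddTips)` or in `δ(u)` for an even tip `u`, so the odd-set constraint
for `T ∪ oddTips` and the degree constraints at the even tips bound its weight by
`(|T| + |oddTips| - 1)/2 + |evenTips| ≤ (|T| + |F| - 1)/2`.
-/

open Finset

namespace Finset

theorem sum_union_le_of_nonneg {ι M : Type*} [DecidableEq ι] [AddCommMonoid M] [PartialOrder M]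
    [IsOrderedAddMonoid M] {s t : Finset ι} {f : ι → M} (hf : ∀ i ∈ t, 0 ≤ f i) :
    ∑ i ∈ s ∪ t, f i ≤ ∑ i ∈ s, f i + ∑ i ∈ t, f i := by
  rw [← sum_union_inter]
  exact le_add_of_nonneg_right (sum_nonneg fun i hi => hf i (mem_inter.1 hi).2)

theorem sum_biUnion_le_of_nonneg {ι κ M : Type*} [DecidableEq κ] [AddCommMonoid M]
    [PartialOrder M] [IsOrderedAddMonoid M] {s : Finset ι} {t : ι → Finset κ} {f : κ → M}
    (hf : ∀ j ∈ s.biUnion t, 0 ≤ f j) :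
    ∑ j ∈ s.biUnion t, f j ≤ ∑ i ∈ s, ∑ j ∈ t i, f j := by
  classical
  induction s using Finset.induction with
  | empty => simp
  | insert a s ha ih =>
    rw [biUnion_insert] at hf ⊢
    rw [sum_insert ha]
    exact (sum_union_le_of_nonneg fun j hj => hf j (mem_union_right _ hj)).trans
      (add_le_add le_rfl (ih fun j hj => hf j (mem_union_right _ hj)))

end Finset

theorem Sym2.exists_eq_mk_of_exists_mem {α : Type*} {p : α → Prop} {e : Sym2 α}
    (h₁ : ∃ v ∈ e, p v) (h₂ : ∃ v ∈ e, ¬ p v) :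
    ∃ a b, p a ∧ ¬ p b ∧ e = s(a, b) := by
  induction e using Sym2.ind with
  | _ x y =>
    obtain ⟨v, hv, hpv⟩ := h₁
    obtain ⟨w, hw, hpw⟩ := h₂
    rcases Sym2.mem_iff.1 hv with rfl | rfl <;> rcases Sym2.mem_iff.1 hw with rfl | rfl
    · exact absurd hpv hpw
    · exact ⟨v, w, hpv, hpw, rfl⟩
    · exact ⟨v, w, hpv, hpw, Sym2.eq_swap⟩
    · exact absurd hpv hpw

theorem SimpleGraph.sum_biUnion_incidenceFinset_le_card {V : Type*} [Fintype V] [DecidableEq V]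
    (G : SimpleGraph V) [DecidableRel G.Adj] {z : Sym2 V → ℝ}
    (hnonneg : ∀ e ∈ G.edgeFinset, 0 ≤ z e) {U : Finset V}
    (hdeg : ∀ i ∈ U, ∑ e ∈ G.incidenceFinset i, z e ≤ 1) :
    ∑ e ∈ U.biUnion (fun i => G.incidenceFinset i), z e ≤ #U := by
  calc ∑ e ∈ U.biUnion (fun i => G.incidenceFinset i), z e
      ≤ ∑ i ∈ U, ∑ e ∈ G.incidenceFinset i, z e :=
        sum_biUnion_le_of_nonneg fun e he =>
          hnonneg e (biUnion_subset.2 (fun i _ => G.incidenceFinset_subset i) he)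
    _ ≤ ∑ _i ∈ U, 1 := sum_le_sum hdeg
    _ = #U := by simp

namespace BlossomTeeth

variable {V : Type*} [DecidableEq V]

def degree (F : Finset (Sym2 V)) (u : V) : ℕ := #{e ∈ F | u ∈ e}

variable [Fintype V] (T : Finset V) (F : Finset (Sym2 V))

def oddTips : Finset V := {u ∈ Tᶜ | Odd (degree F u)}

def evenTips : Finset V := {u ∈ Tᶜ | Even (degree F u) ∧ degree F u ≠ 0}

variable {T F}

theorem sum_degree_compl_eq_card
    (hF : ∀ e ∈ F, (∃ v ∈ e, v ∈ T) ∧ (∃ v ∈ e, v ∉ T)) :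
    ∑ u ∈ Tᶜ, degree F u = #F := by
  have hone : ∀ e ∈ F, #{u ∈ Tᶜ | u ∈ e} = 1 := by
    intro e he
    obtain ⟨a, b, ha, hb, rfl⟩ := Sym2.exists_eq_mk_of_exists_mem (hF e he).1 (hF e he).2
    refine card_eq_one.2 ⟨b, ?_⟩
    ext u
    simp only [mem_filter, mem_compl, Sym2.mem_iff, mem_singleton]
    constructor
    · rintro ⟨hu, rfl | rfl⟩
      · exact absurd ha hu
      · rfl
    · rintro rfl
      exact ⟨hb, Or.inr rfl⟩
  calc ∑ u ∈ Tᶜ, degree F u = ∑ e ∈ F, #{u ∈ Tᶜ | u ∈ e} :=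
        sum_card_bipartiteAbove_eq_sum_card_bipartiteBelow (r := fun u e => u ∈ e)
    _ = #F := by rw [sum_congr rfl hone, card_eq_sum_ones]

theorem card_union_oddTips : #(T ∪ oddTips T F) = #T + #(oddTips T F) :=
  card_union_of_disjoint <| disjoint_left.2 fun _ hT hU => (mem_compl.1 (mem_filter.1 hU).1) hT

theorem odd_card_union_oddTips (hF : ∀ e ∈ F, (∃ v ∈ e, v ∈ T) ∧ (∃ v ∈ e, v ∉ T))
    (hTF : Odd (#T + #F)) : Odd #(T ∪ oddTips T F) := by
  have hpar : Even #F ↔ Even #(oddTips T F) := by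
    rw [← sum_degree_compl_eq_card hF, even_sum_iff_even_card_odd]
    rfl
  rw [card_union_oddTips, Nat.odd_add, ← hpar, ← Nat.odd_add]
  exact hTF

theorem card_oddTips_add_two_mul_card_evenTips_le
    (hF : ∀ e ∈ F, (∃ v ∈ e, v ∈ T) ∧ (∃ v ∈ e, v ∉ T)) :
    #(oddTips T F) + 2 * #(evenTips T F) ≤ #F := by
  have hle (n : ℕ) :
      (if Odd n then 1 else 0) + 2 * (if Even n ∧ n ≠ 0 then 1 else 0) ≤ n := by
    rcases Nat.even_or_odd n with ⟨k, rfl⟩ | ⟨k, rfl⟩ <;> split_ifs <;> grind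
  calc #(oddTips T F) + 2 * #(evenTips T F)
      = ∑ u ∈ Tᶜ, ((if Odd (degree F u) then 1 else 0)
          + 2 * if Even (degree F u) ∧ degree F u ≠ 0 then 1 else 0) := by
        rw [sum_add_distrib, ← mul_sum, oddTips, evenTips, card_filter, card_filter]
    _ ≤ ∑ u ∈ Tᶜ, degree F u := sum_le_sum fun u _ => hle _
    _ = #F := sum_degree_compl_eq_card hF

theorem subset_union_biUnion_incidenceFinset (G : SimpleGraph V) [DecidableRel G.Adj]
    (hF : F ⊆ {e ∈ G.edgeFinset | (∃ v ∈ e, v ∈ T) ∧ (∃ v ∈ e, v ∉ T)}) :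
    {e ∈ G.edgeFinset | ∀ v ∈ e, v ∈ T} ∪ F ⊆
      {e ∈ G.edgeFinset | ∀ v ∈ e, v ∈ T ∪ oddTips T F} ∪
        (evenTips T F).biUnion (fun i => G.incidenceFinset i) := by
  intro e he
  rcases mem_union.1 he with hT | hFe
  · obtain ⟨hE, hv⟩ := mem_filter.1 hT
    exact mem_union_left _ (mem_filter.2 ⟨hE, fun v hv' => mem_union_left _ (hv v hv')⟩)
  · obtain ⟨hE, hcross⟩ := mem_filter.1 (hF hFe)
    obtain ⟨a, b, ha, hb, rfl⟩ := Sym2.exists_eq_mk_of_exists_mem hcross.1 hcross.2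
    have hb_deg : degree F b ≠ 0 :=
      card_ne_zero_of_mem (mem_filter.2 ⟨hFe, Sym2.mem_mk_right a b⟩)
    rcases Nat.even_or_odd (degree F b) with heven | hodd
    · refine mem_union_right _ (mem_biUnion.2 ⟨b, ?_, ?_⟩)
      · exact mem_filter.2 ⟨mem_compl.2 hb, heven, hb_deg⟩
      · exact (G.mem_incidenceFinset b _).2
          ⟨SimpleGraph.mem_edgeFinset.1 hE, Sym2.mem_mk_right a b⟩
    · refine mem_union_left _ (mem_filter.2 ⟨hE, fun v hv => ?_⟩)
      rcases Sym2.mem_iff.1 hv with rfl | rfl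
      · exact mem_union_left _ ha
      · exact mem_union_right _ (mem_filter.2 ⟨mem_compl.2 hb, hodd⟩)

end BlossomTeeth

/-- If `z : E → ℝ` is nonnegative and satisfies the degree constraints and the odd-set
constraints of the matching polytope of `G`, then it also satisfies all
blossom-with-teeth constraints: for any `T ⊆ V` and any set `F` of edges crossing `T`
with `|T| + |F|` odd, `Σ_{e ∈ E(T) ∪ F} z_e ≤ (|T| + |F| - 1)/2`. -/
theorem matching_polytope_implies_blossom_teeth
    {V : Type*} [Fintype V] [DecidableEq V]
    (G : SimpleGraph V) [DecidableRel G.Adj] (z : Sym2 V → ℝ)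
    (hnonneg : ∀ e ∈ G.edgeFinset, 0 ≤ z e)
    (hdeg : ∀ i : V, ∑ e ∈ G.incidenceFinset i, z e ≤ 1)
    (hodd : ∀ S : Finset V, Odd S.card →
      ∑ e ∈ G.edgeFinset.filter (fun e => ∀ v ∈ e, v ∈ S), z e
        ≤ ((S.card : ℝ) - 1) / 2) :
    ∀ (T : Finset V)
      (F : Finset (Sym2 V)),
      F ⊆ G.edgeFinset.filter
        (fun e => (∃ v ∈ e, v ∈ T) ∧ (∃ v ∈ e, v ∉ T)) →
      Odd (T.card + F.card) →
      ∑ e ∈ (G.edgeFinset.filter (fun e => ∀ v ∈ e, v ∈ T)) ∪ F, z e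
        ≤ (((T.card : ℝ) + (F.card : ℝ)) - 1) / 2 := by
  open BlossomTeeth in
  intro T F hF hTF
  have hcross : ∀ e ∈ F, (∃ v ∈ e, v ∈ T) ∧ (∃ v ∈ e, v ∉ T) :=
    fun e he => (mem_filter.1 (hF he)).2
  have hcard : (#(oddTips T F) : ℝ) + 2 * #(evenTips T F) ≤ #F := by
    exact_mod_cast card_oddTips_add_two_mul_card_evenTips_le hcross
  have hS : (#(T ∪ oddTips T F) : ℝ) = #T + #(oddTips T F) := by
    exact_mod_cast card_union_oddTips
  have hC : (evenTips T F).biUnion (fun i => G.incidenceFinset i) ⊆ G.edgeFinset :=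
    biUnion_subset.2 fun i _ => G.incidenceFinset_subset i
  calc ∑ e ∈ {e ∈ G.edgeFinset | ∀ v ∈ e, v ∈ T} ∪ F, z e
      ≤ ∑ e ∈ {e ∈ G.edgeFinset | ∀ v ∈ e, v ∈ T ∪ oddTips T F} ∪
          (evenTips T F).biUnion (fun i => G.incidenceFinset i), z e :=
        sum_le_sum_of_subset_of_nonneg (subset_union_biUnion_incidenceFinset G hF)
          fun e he _ => hnonneg e (union_subset (filter_subset _ _) hC he)
    _ ≤ ∑ e ∈ {e ∈ G.edgeFinset | ∀ v ∈ e, v ∈ T ∪ oddTips T F}, z e +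
          ∑ e ∈ (evenTips T F).biUnion (fun i => G.incidenceFinset i), z e :=
        sum_union_le_of_nonneg fun e he => hnonneg e (hC he)
    _ ≤ ((#(T ∪ oddTips T F) : ℝ) - 1) / 2 + #(evenTips T F) :=
        add_le_add (hodd _ (odd_card_union_oddTips hcross hTF))
          (G.sum_biUnion_incidenceFinset_le_card hnonneg fun i _ => hdeg i)
    _ ≤ ((#T + #F : ℝ) - 1) / 2 := by linarith
end
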